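/- Fix r ≥ 0 and m ≥ 1, and let f₀ : ℕ → ℚ be the sequence f₀(j) = C(j + r, r + 1) for j ≥ 1. Then for every n ≥ 1, the m-th invert transform of f₀ satisfies (𝒴^m f₀)(n) = Σ_{k=1}^{n} C(n + (r+1)k − 1, n − k) · m^(k−1). (For n > 1 this number counts the words of length n − 1 over the alphabet {0, 1, …, m+r+1} avoiding every two-letter pattern a₁a₂ with a₁ < a₂ and a₁, a₂ ∈ {0, …, r+1}.) -/

import Mathlib

/-- The invert transform of a sequence `x : ℕ → ℚ` (indexed from 1, `x 0` ignored):
`(𝒴x)(0) = 0` and `(𝒴x)(n) = x n + ∑_{j=1}^{n-1} x j * (𝒴x)(n-j)` for `n ≥ 1`. -/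
def invert (x : ℕ → ℚ) : ℕ → ℚ
  | 0 => 0
  | n + 1 => x (n + 1) + ∑ j ∈ Finset.range n, x (j + 1) * invert x (n - j)
  termination_by n => n
  decreasing_by omega

/-- The partial Bell polynomial `B_{n,k}(z₁, z₂, …)`, evaluated at a sequence of rationals
`z` (indexed from 1, `z 0` ignored): the sum over all finitely supported `α : ℕ → ℕ` with
`α 0 = 0`, `∑ i, α i = k` and `∑ i, i * α i = n` of `(n! / ∏ i, (α i)!) * ∏ i (z i / i!)^(α i)`. -/
def partialBell (n k : ℕ) (z : ℕ → ℚ) : ℚ :=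
  ∑ α ∈ ((Finset.range (n + 1)).finsuppAntidiag k).filter
      (fun α => (∑ i ∈ Finset.range (n + 1), i * α i) = n ∧ α 0 = 0),
    ((n.factorial : ℚ) / ∏ i ∈ Finset.range (n + 1), ((α i).factorial : ℚ)) *
      ∏ i ∈ Finset.range (n + 1), (z i / (i.factorial : ℚ)) ^ α i

/-!
On generating functions `Φx = ∑_{n ≥ 1} x(n) tⁿ` the recursion defining `invert` reads
`Φ(𝒴x) = Φx · (1 + Φ(𝒴x))`, and induction on `m` gives `Φ(𝒴^m x) · (1 - m Φx) = Φx`, so that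
`Φ(𝒴^m x) = ∑_{k ≥ 1} m^(k-1) (Φx)^k`. For `x = f₀` we have `Φf₀ = t / (1 - t)^(r+2)`, whose
`k`-th power `t^k / (1 - t)^((r+2)k)` has `n`-th coefficient `C(n + (r+1)k - 1, n - k)`, and
vanishes below degree `k`.
-/

open PowerSeries

noncomputable def genFun (x : ℕ → ℚ) : ℚ⟦X⟧ := X * mk fun n => x (n + 1)

theorem coeff_succ_genFun (x : ℕ → ℚ) (n : ℕ) : coeff (n + 1) (genFun x) = x (n + 1) := by
  rw [genFun, coeff_succ_X_mul, coeff_mk]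

theorem constantCoeff_genFun (x : ℕ → ℚ) : constantCoeff (genFun x) = 0 := by
  simp [genFun]

theorem genFun_eq_mk {x : ℕ → ℚ} (hx : x 0 = 0) : genFun x = mk x := by
  ext (_ | n)
  · simp [genFun, hx]
  · rw [coeff_succ_genFun, coeff_mk]

theorem genFun_congr {x y : ℕ → ℚ} (h : ∀ n, 1 ≤ n → x n = y n) : genFun x = genFun y := by
  simp only [genFun, h _ (Nat.succ_pos _)]

theorem invert_zero (x : ℕ → ℚ) : invert x 0 = 0 := by
  rw [invert]

theorem mk_invert (x : ℕ → ℚ) : mk (invert x) = genFun x * (1 + mk (invert x)) := by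
  ext (_ | n)
  · simp [invert_zero, genFun]
  · rw [genFun, mul_assoc, coeff_succ_X_mul, mul_one_add, map_add, coeff_mul,
      Finset.Nat.sum_antidiagonal_eq_sum_range_succ_mk, Finset.sum_range_succ]
    simp only [coeff_mk, Nat.sub_self, invert_zero, mul_zero, add_zero]
    rw [invert]

theorem genFun_iterate_invert_mul (x : ℕ → ℚ) (m : ℕ) :
    genFun (invert^[m] x) * (1 - C (m : ℚ) * genFun x) = genFun x := by
  induction m with
  | zero => simp
  | succ m ih =>
    rw [Function.iterate_succ_apply', genFun_eq_mk (invert_zero _)]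
    have h := mk_invert (invert^[m] x)
    rw [Nat.cast_succ, map_add, map_one]
    linear_combination (1 - C (m : ℚ) * genFun x) * h + (1 + mk (invert (invert^[m] x))) * ih

theorem coeff_eq_sum_coeff_pow_of_mul_one_sub {R : Type*} [CommRing R] {F G : R⟦X⟧} {c : R}
    (hF : constantCoeff F = 0) (h : G * (1 - C c * F) = F) (n : ℕ) :
    coeff n G = ∑ k ∈ Finset.range n, c ^ k * coeff n (F ^ (k + 1)) := by
  have hG : constantCoeff G = 0 := by simpa [hF] using congrArg constantCoeff h
  have hexp : G = F * ∑ k ∈ Finset.range n, (C c * F) ^ k + (C c * F) ^ n * G := by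
    linear_combination (∑ k ∈ Finset.range n, (C c * F) ^ k) * h - G * mul_neg_geom_sum (C c * F) n
  have htail : coeff n ((C c * F) ^ n * G) = 0 := by
    refine X_pow_dvd_iff.mp ?_ n n.lt_succ_self
    rw [pow_succ]
    exact mul_dvd_mul (pow_dvd_pow_of_dvd (dvd_mul_of_dvd_right (X_dvd_iff.mpr hF) _) n)
      (X_dvd_iff.mpr hG)
  rw [hexp, map_add, htail, add_zero, Finset.mul_sum, map_sum]
  refine Finset.sum_congr rfl fun k _ => ?_
  rw [mul_pow, ← map_pow, mul_left_comm, ← pow_succ', coeff_C_mul]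

theorem invOneSubPow_mul (S : Type*) [CommRing S] (d k : ℕ) :
    invOneSubPow S (d * k) = invOneSubPow S d ^ k := by
  simp_rw [invOneSubPow_eq_inv_one_sub_pow, pow_mul]

theorem coeff_X_pow_mul_invOneSubPow {S : Type*} [CommRing S] {d k n : ℕ} (hd : 0 < d)
    (hk : k ≤ n) :
    coeff n (X ^ k * (invOneSubPow S d : S⟦X⟧)) = ((n - k + d - 1).choose (n - k) : S) := by
  obtain ⟨j, rfl⟩ := Nat.exists_eq_add_of_le' hk
  rw [coeff_X_pow_mul, invOneSubPow_val_eq_mk_sub_one_add_choose_of_pos S d hd, coeff_mk,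
    Nat.choose_symm_add, Nat.add_sub_cancel, Nat.add_comm (d - 1), Nat.add_sub_assoc hd]

theorem genFun_choose (r : ℕ) :
    genFun (fun j => ((j + r).choose (r + 1) : ℚ)) = X * (invOneSubPow ℚ (r + 2) : ℚ⟦X⟧) := by
  rw [genFun, invOneSubPow_val_succ_eq_mk_add_choose]
  congr 2
  funext j
  rw [show j + 1 + r = r + 1 + j by ring]

theorem coeff_X_mul_invOneSubPow_pow {S : Type*} [CommRing S] {r k n : ℕ} (hk : 1 ≤ k)
    (hkn : k ≤ n) :
    coeff n ((X * (invOneSubPow S (r + 2) : S⟦X⟧)) ^ k)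
      = ((n + (r + 1) * k - 1).choose (n - k) : S) := by
  rw [mul_pow, ← Units.val_pow_eq_pow_val, ← invOneSubPow_mul,
    coeff_X_pow_mul_invOneSubPow (by positivity) hkn]
  obtain ⟨j, rfl⟩ := Nat.exists_eq_add_of_le' hkn
  rw [Nat.add_sub_cancel, show (r + 2) * k = (r + 1) * k + k by ring]
  congr 2
  omega

theorem stmt_14_general (r m : ℕ) (f₀ : ℕ → ℚ)
    (hf : ∀ j, 1 ≤ j → f₀ j = ((j + r).choose (r + 1) : ℚ)) (n : ℕ) (hn : 1 ≤ n) :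
    (invert^[m] f₀) n
      = ∑ k ∈ Finset.Icc 1 n,
          ((n + (r + 1) * k - 1).choose (n - k) : ℚ) * (m : ℚ) ^ (k - 1) := by
  have hf₀ : genFun f₀ = X * (invOneSubPow ℚ (r + 2) : ℚ⟦X⟧) :=
    (genFun_congr hf).trans (genFun_choose r)
  obtain ⟨n, rfl⟩ := Nat.exists_eq_add_of_le' hn
  rw [← coeff_succ_genFun (invert^[m] f₀), coeff_eq_sum_coeff_pow_of_mul_one_sub (constantCoeff_genFun f₀)
      (genFun_iterate_invert_mul f₀ m), hf₀, ← Finset.Ico_add_one_right_eq_Icc,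
    Finset.sum_Ico_eq_sum_range, Nat.add_sub_cancel]
  refine Finset.sum_congr rfl fun k hk => ?_
  rw [coeff_X_mul_invOneSubPow_pow le_add_self (Finset.mem_range.mp hk), add_comm 1 k,
    Nat.add_sub_cancel, mul_comm]

/-- For `f₀ j = C(j+r, r+1)` and `m ≥ 1`:
`(𝒴^m f₀)(n) = ∑_{k=1}^{n} C(n+(r+1)k-1, n-k) m^(k-1)`,
which for `n > 1` counts words of length `n-1` over `{0,…,m+r+1}` avoiding every
pattern `a₁a₂` with `a₁ < a₂`, `a₁, a₂ ∈ {0,…,r+1}`. -/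
theorem stmt_14 (r m : ℕ) (hm : 1 ≤ m) (f₀ : ℕ → ℚ)
    (hf : ∀ j, 1 ≤ j → f₀ j = ((j + r).choose (r + 1) : ℚ)) (n : ℕ) (hn : 1 ≤ n) :
    (invert^[m] f₀) n
      = ∑ k ∈ Finset.Icc 1 n,
          ((n + (r + 1) * k - 1).choose (n - k) : ℚ) * (m : ℚ) ^ (k - 1) :=
  stmt_14_general r m f₀ hf n hn
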